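/- Assume n ≥ 0 and let λ ∈ ℂ. Then every eigenvalue of L(λ) has geometric multiplicity one: for each μ ∈ ℂ, the eigenspace {v ∈ ℂ^{ℓ+1} : L(λ)v = μv} has dimension at most one. -/
import Mathlib

open Matrix

noncomputable def matA0 (n : ℤ) (ℓ : ℕ) : Matrix (Fin (ℓ + 1)) (Fin (ℓ + 1)) ℂ :=
  Matrix.diagonal fun i => (n : ℂ) + ℓ - i + 1

noncomputable def matB0 (ℓ : ℕ) : Matrix (Fin (ℓ + 1)) (Fin (ℓ + 1)) ℂ :=
  Matrix.of fun i j => ((i : ℂ) + 1) * ((ℓ : ℂ) - i) *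
    ((if (j : ℕ) = (i : ℕ) + 1 then 1 else 0) - if j = i then 1 else 0)

noncomputable def matC0 (n : ℤ) (ℓ : ℕ) : Matrix (Fin (ℓ + 1)) (Fin (ℓ + 1)) ℂ :=
  Matrix.of fun i j =>
    ((n : ℂ) - ℓ + 3 * i) * ((n : ℂ) + ℓ - i + 1) * (if j = i then 1 else 0)
      - 3 * ((i : ℂ) + 1) * ((ℓ : ℂ) - i) * (if (j : ℕ) = (i : ℕ) + 1 then 1 else 0)

noncomputable def matD0 (n : ℤ) (ℓ : ℕ) : Matrix (Fin (ℓ + 1)) (Fin (ℓ + 1)) ℂ :=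
  Matrix.of fun i j =>
    ((n : ℂ) + 2 * ℓ - 3 * i) * ((i : ℂ) + 1) * ((ℓ : ℂ) - i) *
        ((if (j : ℕ) = (i : ℕ) + 1 then 1 else 0) - if j = i then 1 else 0)
      - 3 * ((n : ℂ) + ℓ - i + 1) * (i : ℂ) * ((ℓ : ℂ) - i + 1) *
        ((if j = i then 1 else 0) - if (j : ℕ) + 1 = (i : ℕ) then 1 else 0)

/-- The matrix `L(λ) = D₀ − C₀A₀⁻¹(B₀ − λI)`. -/
noncomputable def matL (n : ℤ) (ℓ : ℕ) (lam : ℂ) : Matrix (Fin (ℓ + 1)) (Fin (ℓ + 1)) ℂ :=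
  matD0 n ℓ - matC0 n ℓ * (matA0 n ℓ)⁻¹ *
    (matB0 ℓ - lam • (1 : Matrix (Fin (ℓ + 1)) (Fin (ℓ + 1)) ℂ))

lemma prod_entry_zero (n : ℤ) (ℓ : ℕ) (lam : ℂ) (r c : Fin (ℓ + 1))
    (h : (c : ℕ) + 1 ≤ (r : ℕ)) :
    (matC0 n ℓ * (matA0 n ℓ)⁻¹ *
      (matB0 ℓ - lam • (1 : Matrix (Fin (ℓ + 1)) (Fin (ℓ + 1)) ℂ))) r c = 0 := by
  rw [matA0, Matrix.inv_diagonal, Matrix.mul_apply]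
  apply Finset.sum_eq_zero
  intro k _
  rw [Matrix.mul_diagonal]
  by_cases hk : (k : ℕ) = (r : ℕ) ∨ (k : ℕ) = (r : ℕ) + 1
  · have hck : c ≠ k := by
      intro hc; subst hc; omega
    have hck2 : (c : ℕ) ≠ (k : ℕ) + 1 := by omega
    have : (matB0 ℓ - lam • (1 : Matrix (Fin (ℓ + 1)) (Fin (ℓ + 1)) ℂ)) k c = 0 := by
      simp [matB0, Matrix.sub_apply, Matrix.smul_apply, Matrix.one_apply,
        hck, hck2, Ne.symm hck]
    rw [this, mul_zero]
  · push_neg at hk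
    have h1 : k ≠ r := by
      intro hc; subst hc; exact hk.1 rfl
    have : matC0 n ℓ r k = 0 := by
      simp [matC0, h1, hk.2]
    rw [this, zero_mul, zero_mul]

lemma matL_entry_zero (n : ℤ) (ℓ : ℕ) (lam : ℂ) (r c : Fin (ℓ + 1))
    (h : (c : ℕ) + 1 < (r : ℕ)) :
    matL n ℓ lam r c = 0 := by
  have h0 := prod_entry_zero n ℓ lam r c (le_of_lt h)
  have h1 : c ≠ r := by intro hc; subst hc; omega
  have h2 : (c : ℕ) ≠ (r : ℕ) + 1 := by omega
  have h3 : (c : ℕ) + 1 ≠ (r : ℕ) := by omega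
  simp [matL, Matrix.sub_apply, h0, matD0, h1, h2, h3]

lemma matL_entry_sub (n : ℤ) (ℓ : ℕ) (lam : ℂ) (r c : Fin (ℓ + 1))
    (h : (c : ℕ) + 1 = (r : ℕ)) :
    matL n ℓ lam r c = 3 * ((n : ℂ) + ℓ - r + 1) * r * ((ℓ : ℂ) - r + 1) := by
  have h0 := prod_entry_zero n ℓ lam r c (le_of_eq h)
  have h1 : c ≠ r := by intro hc; subst hc; omega
  have h2 : (c : ℕ) ≠ (r : ℕ) + 1 := by omega
  simp only [matL, Matrix.sub_apply, h0, sub_zero, matD0, Matrix.of_apply,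
    h1, h2, h, if_true, if_false]
  ring

lemma matL_coeff_ne_zero (n : ℤ) (hn : 0 ≤ n) (ℓ : ℕ) (r : Fin (ℓ + 1))
    (hr : 1 ≤ (r : ℕ)) :
    (3 : ℂ) * ((n : ℂ) + ℓ - r + 1) * r * ((ℓ : ℂ) - r + 1) ≠ 0 := by
  have hrl : (r : ℕ) ≤ ℓ := by omega
  have e1 : ((n : ℂ) + ℓ - r + 1) = ((n + ℓ - r + 1 : ℤ) : ℂ) := by push_cast; ring
  have e2 : ((ℓ : ℂ) - r + 1) = ((ℓ - (r : ℕ) + 1 : ℕ) : ℂ) := by push_cast [hrl]; ring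
  have h1 : ((n + ℓ - (r : ℕ) + 1 : ℤ) : ℂ) ≠ 0 := by
    exact_mod_cast (by omega : (n + ℓ - (r : ℕ) + 1 : ℤ) ≠ 0)
  have h2 : ((ℓ - (r : ℕ) + 1 : ℕ) : ℂ) ≠ 0 := by
    exact_mod_cast (by omega : (ℓ - (r : ℕ) + 1 : ℕ) ≠ 0)
  have h3 : ((r : ℕ) : ℂ) ≠ 0 := by
    exact_mod_cast (by omega : (r : ℕ) ≠ 0)
  rw [e1, e2]
  exact mul_ne_zero (mul_ne_zero (mul_ne_zero three_ne_zero h1) h3) h2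

lemma key_zero (n : ℤ) (hn : 0 ≤ n) (ℓ : ℕ) (lam mu : ℂ) (v : Fin (ℓ + 1) → ℂ)
    (hv : (matL n ℓ lam).mulVec v = mu • v) (hlast : v ⟨ℓ, Nat.lt_succ_self ℓ⟩ = 0) :
    v = 0 := by
  have main : ∀ k : ℕ, ∀ j : Fin (ℓ + 1), ℓ ≤ (j : ℕ) + k → v j = 0 := by
    intro k
    induction k with
    | zero =>
      intro j hj
      have : j = ⟨ℓ, Nat.lt_succ_self ℓ⟩ := by
        apply Fin.ext; simp; omega
      rw [this]; exact hlast
    | succ k ih =>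
      intro j hj
      by_cases hcase : ℓ ≤ (j : ℕ) + k
      · exact ih j hcase
      have hje : (j : ℕ) + k + 1 = ℓ := by omega
      set r : Fin (ℓ + 1) := ⟨(j : ℕ) + 1, by omega⟩ with hr
      have hrow := congrFun hv r
      have hvr : v r = 0 := ih r (by simp [hr]; omega)
      rw [Matrix.mulVec, dotProduct] at hrow
      have hsum : ∑ c, matL n ℓ lam r c * v c = matL n ℓ lam r j * v j := by
        apply Finset.sum_eq_single
        · intro c _ hc
          rcases lt_trichotomy ((c : ℕ)) ((j : ℕ)) with h | h | h
          · rw [matL_entry_zero n ℓ lam r c (by simp [hr]; omega), zero_mul]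
          · exact absurd (Fin.ext h) hc
          · rw [ih c (by omega), mul_zero]
        · intro hne; exact absurd (Finset.mem_univ j) hne
      rw [hsum] at hrow
      rw [matL_entry_sub n ℓ lam r j (by simp [hr])] at hrow
      have hcoeff := matL_coeff_ne_zero n hn ℓ r (by simp [hr])
      simp only [Pi.smul_apply, hvr, smul_zero] at hrow
      exact (mul_eq_zero.mp hrow).resolve_left hcoeff
  funext j
  exact main (ℓ + 1) j (by omega)

/-- For `n ≥ 0`, every eigenvalue of `L(λ)` has geometric multiplicity one: each
eigenspace has dimension at most one. -/
theorem stmt12 (n : ℤ) (hn : 0 ≤ n) (ℓ : ℕ) (lam : ℂ) :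
    ∀ mu : ℂ,
      Module.finrank ℂ
        (Module.End.eigenspace (Matrix.toLin' (matL n ℓ lam)) mu) ≤ 1 := by
  intro mu
  set E := Module.End.eigenspace (Matrix.toLin' (matL n ℓ lam)) mu
  let f : E →ₗ[ℂ] ℂ :=
    (LinearMap.proj ⟨ℓ, Nat.lt_succ_self ℓ⟩) ∘ₗ E.subtype
  have hinj : Function.Injective f := by
    rw [← LinearMap.ker_eq_bot, LinearMap.ker_eq_bot']
    intro m hm
    have hmem := m.2
    rw [Module.End.mem_eigenspace_iff, Matrix.toLin'_apply] at hmem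
    have := key_zero n hn ℓ lam mu m.1 hmem hm
    exact Subtype.ext this
  calc Module.finrank ℂ E ≤ Module.finrank ℂ ℂ :=
        LinearMap.finrank_le_finrank_of_injective hinj
    _ = 1 := Module.finrank_self ℂ
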